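/- In ℝ² with the ℓ¹ norm ‖(x,y)‖₁ = |x| + |y|, the two point sites p⁻ = (0,0) and p⁺ = (0,3) admit at least two distinct zone diagrams. -/

import Mathlib

open EMetric Set

/-- The plane with the ℓ¹ norm. -/
abbrev L1Plane := PiLp 1 (fun _ : Fin 2 => ℝ)

/-- The dominance region of `A` over `B` in the ℓ¹ plane. -/
def dom (A B : Set L1Plane) : Set L1Plane :=
  {x | infEdist x A ≤ infEdist x B}

/-!
Take the lower region `R = {y ≤ 0} ∪ {3y + |x| ≤ 3}` for the site `(0,0)` and the truncated cone
`S = {|x| ≤ 3, 3y ≥ 6 + |x|}` for `(0,3)`. Each is the dominance region of its site over the other: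
points of the one region are no closer to the other region than to their own site, and every point
outside gets an explicit closer witness. The reflection `σ (x, y) = (x, 3 - y)` is an ℓ¹ isometry
swapping the two sites, so it carries `(R, S)` to a second zone diagram `(σ S, σ R)`; since `R`
contains `(4, 0)` while `σ S` lies in the strip `|x| ≤ 3`, the two diagrams differ.
-/

-- `EMetric.infEdist` is a separate (deprecated) constant, so simp lemmas about
-- `Metric.infEDist` only apply after this restatement.
lemma mem_dom_iff {A B : Set L1Plane} {x : L1Plane} :
    x ∈ dom A B ↔ Metric.infEDist x A ≤ Metric.infEDist x B :=
  Iff.rfl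

lemma mem_dom_singleton {q x : L1Plane} {S : Set L1Plane} :
    x ∈ dom {q} S ↔ ∀ y ∈ S, dist x q ≤ dist x y := by
  simp only [mem_dom_iff, Metric.infEDist_singleton, Metric.le_infEDist, edist_dist,
    ENNReal.ofReal_le_ofReal_iff dist_nonneg]

lemma eq_dom_singleton {q : L1Plane} {S T : Set L1Plane}
    (h_le : ∀ x ∈ S, ∀ y ∈ T, dist x q ≤ dist x y)
    (h_lt : ∀ x ∉ S, ∃ y ∈ T, dist x y < dist x q) : S = dom {q} T := by
  ext x
  rw [mem_dom_singleton]
  refine ⟨h_le x, fun h => by_contra fun hx => ?_⟩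
  obtain ⟨y, hy, hlt⟩ := h_lt x hx
  exact (h y hy).not_gt hlt

lemma image_dom (e : L1Plane ≃ᵢ L1Plane) (X Y : Set L1Plane) :
    e '' dom X Y = dom (e '' X) (e '' Y) := by
  ext x
  obtain ⟨z, rfl⟩ := e.surjective x
  simp only [mem_dom_iff, e.injective.mem_set_image, Metric.infEDist_image e.isometry]

def IsZoneDiagram (p q : L1Plane) (R₁ R₂ : Set L1Plane) : Prop :=
  R₁ = dom {p} R₂ ∧ R₂ = dom {q} R₁

lemma IsZoneDiagram.symm {p q : L1Plane} {R₁ R₂ : Set L1Plane} (h : IsZoneDiagram p q R₁ R₂) :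
    IsZoneDiagram q p R₂ R₁ :=
  And.symm h

lemma IsZoneDiagram.image {p q : L1Plane} {R₁ R₂ : Set L1Plane} (h : IsZoneDiagram p q R₁ R₂)
    (e : L1Plane ≃ᵢ L1Plane) : IsZoneDiagram (e p) (e q) (e '' R₁) (e '' R₂) := by
  constructor
  · rw [h.1, image_dom, image_singleton]
  · rw [h.2, image_dom, image_singleton]

noncomputable def pt (a b : ℝ) : L1Plane := (WithLp.equiv 1 (Fin 2 → ℝ)).symm ![a, b]

@[simp] lemma pt_apply_zero (a b : ℝ) : pt a b 0 = a := rfl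
@[simp] lemma pt_apply_one (a b : ℝ) : pt a b 1 = b := rfl

lemma dist_eq_abs_add_abs (x y : L1Plane) : dist x y = |x 0 - y 0| + |x 1 - y 1| := by
  simp [PiLp.dist_eq_of_L1, Fin.sum_univ_two, Real.dist_eq]

noncomputable def reflect : L1Plane ≃ᵢ L1Plane where
  toFun x := pt (x 0) (3 - x 1)
  invFun x := pt (x 0) (3 - x 1)
  left_inv x := by ext i; fin_cases i <;> simp
  right_inv x := by ext i; fin_cases i <;> simp
  isometry_toFun := Isometry.of_dist_eq fun x y => by
    simp only [dist_eq_abs_add_abs, pt_apply_zero, pt_apply_one, sub_sub_sub_cancel_left,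
      abs_sub_comm]

lemma reflect_pt (a b : ℝ) : reflect (pt a b) = pt a (3 - b) :=
  rfl

def lowerRegion : Set L1Plane := {x | x 1 ≤ 0 ∨ 3 * x 1 + |x 0| ≤ 3}

def upperRegion : Set L1Plane := {x | |x 0| ≤ 3 ∧ 6 + |x 0| ≤ 3 * x 1}

lemma dist_pt_zero_zero_le {x y : L1Plane} (hx : x ∈ lowerRegion)
    (hy : y ∈ upperRegion) : dist x (pt 0 0) ≤ dist x y := by
  obtain ⟨hc, hcd⟩ := hy
  simp only [dist_eq_abs_add_abs, pt_apply_zero, pt_apply_one, sub_zero]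
  have hb : x 1 ≤ 1 := by rcases hx with h | h <;> linarith [abs_nonneg (x 0)]
  rw [abs_of_nonpos (by linarith [abs_nonneg (y 0)] : x 1 - y 1 ≤ 0)]
  suffices |x 1| ≤ |x 0 - y 0| - (x 1 - y 1) - |x 0| by linarith
  have htri := abs_sub_abs_le_abs_sub (x 0) (y 0)
  rw [abs_le]
  constructor <;> rcases hx with h | h <;> linarith [abs_nonneg (x 0 - y 0)]

lemma exists_mem_upperRegion_dist_lt {x : L1Plane} (hx : x ∉ lowerRegion) :
    ∃ y ∈ upperRegion, dist x y < dist x (pt 0 0) := by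
  simp only [lowerRegion, mem_ofPred_eq, not_or, not_le] at hx
  obtain ⟨hb, hab⟩ := hx
  simp only [dist_eq_abs_add_abs, pt_apply_zero, pt_apply_one, sub_zero, abs_of_pos hb]
  rcases le_or_gt |x 0| 3 with ha | ha
  · refine ⟨pt (x 0) (2 + |x 0| / 3), ⟨ha, le_of_eq (by simp; ring)⟩, ?_⟩
    simp only [pt_apply_zero, pt_apply_one, sub_self, abs_zero, zero_add, abs_sub_lt_iff]
    constructor <;> linarith [abs_nonneg (x 0)]
  have hb3 : |x 1 - 3| < x 1 + 3 := abs_sub_lt_iff.2 ⟨by linarith, by linarith⟩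
  rcases le_or_gt 0 (x 0) with hs | hs
  · refine ⟨pt 3 3, by norm_num [upperRegion], ?_⟩
    rw [abs_of_nonneg hs] at ha
    simp only [pt_apply_zero, pt_apply_one, abs_of_nonneg hs, abs_of_pos (sub_pos.2 ha)]
    linarith
  · refine ⟨pt (-3) 3, by norm_num [upperRegion], ?_⟩
    rw [abs_of_neg hs] at ha
    simp only [pt_apply_zero, pt_apply_one, abs_of_neg hs, abs_of_neg (by linarith : x 0 - -3 < 0)]
    linarith

lemma dist_pt_zero_three_le {x y : L1Plane} (hx : x ∈ upperRegion)
    (hy : y ∈ lowerRegion) : dist x (pt 0 3) ≤ dist x y := by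
  obtain ⟨ha, hab⟩ := hx
  simp only [dist_eq_abs_add_abs, pt_apply_zero, pt_apply_one, sub_zero]
  have hd : y 1 ≤ 1 := by rcases hy with h | h <;> linarith [abs_nonneg (y 0)]
  rw [abs_of_nonneg (by linarith [abs_nonneg (x 0)] : 0 ≤ x 1 - y 1)]
  suffices |x 1 - 3| ≤ |x 0 - y 0| + (x 1 - y 1) - |x 0| by linarith
  have htri := abs_sub_abs_le_abs_sub (x 0) (y 0)
  rw [abs_le]
  constructor <;> rcases hy with h | h <;> rcases le_total (y 1) 0 with hd' | hd' <;>
    linarith [abs_nonneg (x 0 - y 0), abs_nonneg (y 0)]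

lemma exists_mem_lowerRegion_dist_lt {x : L1Plane} (hx : x ∉ upperRegion) :
    ∃ y ∈ lowerRegion, dist x y < dist x (pt 0 3) := by
  simp only [upperRegion, mem_ofPred_eq, not_and, not_le] at hx
  simp only [dist_eq_abs_add_abs, pt_apply_zero, pt_apply_one, sub_zero]
  rcases le_or_gt |x 0| 3 with ha | ha
  · have hb := hx ha
    refine ⟨pt (x 0) (1 - |x 0| / 3), Or.inr (le_of_eq (by simp; ring)), ?_⟩
    simp only [pt_apply_zero, pt_apply_one, sub_self, abs_zero, zero_add,
      abs_of_neg (by linarith : x 1 - 3 < 0), abs_sub_lt_iff]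
    constructor <;> linarith [abs_nonneg (x 0)]
  · refine ⟨pt (x 0) 0, Or.inl le_rfl, ?_⟩
    simp only [pt_apply_zero, pt_apply_one, sub_self, abs_zero, zero_add, sub_zero, abs_lt]
    constructor <;> linarith [le_abs_self (x 1 - 3), neg_abs_le (x 1 - 3)]

lemma isZoneDiagram_lowerRegion_upperRegion :
    IsZoneDiagram (pt 0 0) (pt 0 3) lowerRegion upperRegion :=
  ⟨eq_dom_singleton (fun _ hx _ hy => dist_pt_zero_zero_le hx hy)
      fun _ => exists_mem_upperRegion_dist_lt,
    eq_dom_singleton (fun _ hx _ hy => dist_pt_zero_three_le hx hy)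
      fun _ => exists_mem_lowerRegion_dist_lt⟩

lemma isZoneDiagram_reflect_upperRegion_reflect_lowerRegion :
    IsZoneDiagram (pt 0 0) (pt 0 3) (reflect '' upperRegion) (reflect '' lowerRegion) := by
  simpa only [reflect_pt, sub_zero, sub_self] using
    (isZoneDiagram_lowerRegion_upperRegion.image reflect).symm

lemma lowerRegion_ne_reflect_upperRegion : lowerRegion ≠ reflect '' upperRegion := by
  intro h
  have hmem : pt 4 0 ∈ reflect '' upperRegion := h ▸ Or.inl le_rfl
  obtain ⟨z, ⟨hz, -⟩, hzx⟩ := hmem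
  have hz0 : z 0 = 4 := congrArg (· 0) hzx
  rw [hz0] at hz
  norm_num at hz

/-- In the ℓ¹ plane, the two point sites `(0,0)` and `(0,3)` admit at least two
distinct zone diagrams. -/
theorem l1_zone_diagram_not_unique :
    ∃ R₁ R₂ S₁ S₂ : Set L1Plane,
      R₁ = dom {(WithLp.equiv 1 (Fin 2 → ℝ)).symm ![0, 0]} R₂ ∧
      R₂ = dom {(WithLp.equiv 1 (Fin 2 → ℝ)).symm ![0, 3]} R₁ ∧
      S₁ = dom {(WithLp.equiv 1 (Fin 2 → ℝ)).symm ![0, 0]} S₂ ∧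
      S₂ = dom {(WithLp.equiv 1 (Fin 2 → ℝ)).symm ![0, 3]} S₁ ∧
      (R₁ ≠ S₁ ∨ R₂ ≠ S₂) := by
  obtain ⟨h₁, h₂⟩ := isZoneDiagram_lowerRegion_upperRegion
  obtain ⟨h₃, h₄⟩ := isZoneDiagram_reflect_upperRegion_reflect_lowerRegion
  exact ⟨_, _, _, _, h₁, h₂, h₃, h₄, Or.inl lowerRegion_ne_reflect_upperRegion⟩
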